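/- For every stochastic vector x = (x_1,...,x_n) (nonnegative entries summing to 1), each entry satisfies x_j / ∏_{k=1}^n (1-x_k)^{1-x_k} ≤ e^{1/e}. -/

import Mathlib

/-!
Since the `x k` sum to one, `x k ≤ 1`, and the elementary bound `s ^ s ≥ exp (s - 1)` applied to
`s = 1 - x k` for `k ≠ j` gives `∏_{k ≠ j} (1 - x k) ^ (1 - x k) ≥ exp (-∑_{k ≠ j} x k) = exp (x j - 1)`.
The remaining factor is at least `exp (-1/e)`, the minimum of `s ^ s`, and `x j ≤ exp (x j - 1)`.
-/

open Real Finset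

namespace Real

lemma rpow_self_eq_exp_mul_log {s : ℝ} (hs : 0 ≤ s) : s ^ s = exp (s * log s) := by
  rcases hs.eq_or_lt with rfl | hs
  · simp
  · rw [rpow_def_of_pos hs, mul_comm]

lemma neg_one_div_exp_one_le_mul_log {s : ℝ} (hs : 0 ≤ s) : -(1 / exp 1) ≤ s * log s := by
  rcases hs.eq_or_lt with rfl | hs
  · simp [(exp_pos 1).le]
  -- `x - 1 ≤ x log x` at `x = e s`
  have key := self_sub_one_le_mul_log (mul_pos (exp_pos 1) hs).le
  rw [log_mul (exp_pos 1).ne' hs.ne', log_exp] at key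
  rw [neg_le, neg_mul_eq_neg_mul, le_div_iff₀ (exp_pos 1)]
  linarith

lemma exp_sub_one_le_rpow_self {s : ℝ} (hs : 0 ≤ s) : exp (s - 1) ≤ s ^ s := by
  rw [rpow_self_eq_exp_mul_log hs, exp_le_exp]
  exact self_sub_one_le_mul_log hs

lemma exp_neg_one_div_exp_one_le_rpow_self {s : ℝ} (hs : 0 ≤ s) :
    exp (-(1 / exp 1)) ≤ s ^ s := by
  rw [rpow_self_eq_exp_mul_log hs, exp_le_exp]
  exact neg_one_div_exp_one_le_mul_log hs

end Real

lemma exp_le_prod_one_sub_rpow_one_sub {ι : Type*} [Fintype ι] [DecidableEq ι] (x : ι → ℝ)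
    (hx : ∀ k, 0 ≤ x k) (hsum : ∑ k, x k = 1) (j : ι) :
    exp (-(1 / exp 1) + (x j - 1)) ≤ ∏ k, (1 - x k) ^ (1 - x k) := by
  have hle : ∀ k, x k ≤ 1 := fun k ↦
    hsum ▸ single_le_sum (fun i _ ↦ hx i) (mem_univ k)
  have hrest : x j - 1 = ∑ k ∈ univ.erase j, -x k := by
    rw [sum_neg_distrib, ← hsum, ← add_sum_erase univ x (mem_univ j)]
    ring
  rw [← mul_prod_erase univ _ (mem_univ j), exp_add, hrest, exp_sum]
  refine mul_le_mul (exp_neg_one_div_exp_one_le_rpow_self (sub_nonneg.2 (hle j)))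
    (prod_le_prod (fun k _ ↦ (exp_pos _).le) fun k _ ↦ ?_) (by positivity)
    (rpow_nonneg (sub_nonneg.2 (hle j)) _)
  simpa using exp_sub_one_le_rpow_self (sub_nonneg.2 (hle k))

theorem stmt_6 {n : ℕ} (x : Fin n → ℝ)
    (hx : ∀ k, 0 ≤ x k) (hsum : ∑ k, x k = 1) (j : Fin n) :
    x j / ∏ k, (1 - x k) ^ (1 - x k) ≤ Real.exp (1 / Real.exp 1) := by
  have hprod := exp_le_prod_one_sub_rpow_one_sub x hx hsum j
  rw [div_le_iff₀ ((exp_pos _).trans_le hprod)]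
  calc x j ≤ exp (x j - 1) := by linarith [add_one_le_exp (x j - 1)]
    _ = exp (1 / exp 1) * exp (-(1 / exp 1) + (x j - 1)) := by rw [← exp_add]; ring_nf
    _ ≤ exp (1 / exp 1) * ∏ k, (1 - x k) ^ (1 - x k) := by gcongr
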